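/- arXiv:2407.06934 — 2 statements merged into one kernel-verified Lean document; each statement's English description precedes it below -/
import Mathlib

section
/- Let n, k be positive integers with n > 2k and let P_k(X) = ∏_{ℓ=1}^{k} (X + ((n+2k-4ℓ)/2)^2). Then P_k(n - 2k) ≤ ((n+2k)/(n-2k)) · P_k(0). -/
open Finset

lemma telescope_aux (k : ℕ) (c : ℝ) :
    (∏ ℓ ∈ Finset.Icc 1 k, ((c - 2*ℓ + 2)*(c - 2*ℓ))) * (c - 2*k) =
      c * ∏ ℓ ∈ Finset.Icc 1 k, (c - 2*ℓ)^2 := by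
  induction k with
  | zero => simp
  | succ k ih =>
    rw [Finset.prod_Icc_succ_top (by omega), Finset.prod_Icc_succ_top (by omega)]
    push_cast
    have : (∏ ℓ ∈ Finset.Icc 1 k, ((c - 2*ℓ + 2)*(c - 2*ℓ))) * ((c - 2*(k+1) + 2)*(c - 2*(k+1))) * (c - 2*(k+1))
        = ((∏ ℓ ∈ Finset.Icc 1 k, ((c - 2*ℓ + 2)*(c - 2*ℓ))) * (c - 2*k)) * (c - 2*(k+1))^2 := by
      ring
    push_cast at this ⊢
    rw [this, ih]
    ring

theorem Pk_eval_lower (n k : ℕ) (hk : 0 < k) (hn : 2 * k < n) :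
    (∏ ℓ ∈ Finset.Icc 1 k, (((n : ℝ) - 2 * k) + ((n : ℝ) / 2 + k - 2 * ℓ) ^ 2)) ≤
      (((n : ℝ) + 2 * k) / ((n : ℝ) - 2 * k)) *
        ∏ ℓ ∈ Finset.Icc 1 k, ((0 : ℝ) + ((n : ℝ) / 2 + k - 2 * ℓ) ^ 2) := by
  set c : ℝ := (n : ℝ) / 2 + k with hc
  have hnk : (0 : ℝ) < (n : ℝ) - 2 * k := by
    have : (2 * k : ℝ) < n := by exact_mod_cast hn
    linarith
  have hck : (0 : ℝ) < c - 2 * k := by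
    rw [hc]; linarith
  -- step 1: termwise bound
  have h1 : (∏ ℓ ∈ Finset.Icc 1 k, (((n : ℝ) - 2 * k) + (c - 2 * ℓ) ^ 2)) ≤
      ∏ ℓ ∈ Finset.Icc 1 k, ((c - 2*ℓ + 2)*(c - 2*ℓ)) := by
    apply Finset.prod_le_prod
    · intro i _
      positivity
    · intro i hi
      have hi' : (i : ℝ) ≤ k := by
        exact_mod_cast (Finset.mem_Icc.mp hi).2
      rw [hc]
      nlinarith [sq_nonneg ((n:ℝ)/2 + k - 2*i)]
  have h2 := telescope_aux k c
  have hQ : (0 : ℝ) ≤ ∏ ℓ ∈ Finset.Icc 1 k, (c - 2*ℓ)^2 := by positivity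
  have h3 : ∏ ℓ ∈ Finset.Icc 1 k, ((c - 2*ℓ + 2)*(c - 2*ℓ)) =
      (((n : ℝ) + 2 * k) / ((n : ℝ) - 2 * k)) * ∏ ℓ ∈ Finset.Icc 1 k, (c - 2*ℓ)^2 := by
    have hck' : c - 2 * k ≠ 0 := ne_of_gt hck
    rw [div_mul_eq_mul_div, eq_div_iff (ne_of_gt hnk)]
    simp only [hc] at h2 ⊢
    linear_combination 2 * h2
  calc (∏ ℓ ∈ Finset.Icc 1 k, (((n : ℝ) - 2 * k) + (c - 2 * ℓ) ^ 2))
      ≤ ∏ ℓ ∈ Finset.Icc 1 k, ((c - 2*ℓ + 2)*(c - 2*ℓ)) := h1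
    _ = (((n : ℝ) + 2 * k) / ((n : ℝ) - 2 * k)) * ∏ ℓ ∈ Finset.Icc 1 k, (c - 2*ℓ)^2 := h3
    _ = (((n : ℝ) + 2 * k) / ((n : ℝ) - 2 * k)) * ∏ ℓ ∈ Finset.Icc 1 k, ((0:ℝ) + (c - 2*ℓ)^2) := by
        simp
end

section
/- Let n, k be positive integers with n > 2k and let P_k(X) = ∏_{ℓ=1}^{k} (X + ((n/2)+k-2ℓ)^2). Then P_k(n + 2k - 4) ≥ ((n+2k)/(n-2k)) · P_k(0). -/
open Finset

lemma tele_aux (x : ℝ) (k : ℕ) :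
    x * ∏ ℓ ∈ Finset.Icc 1 k, (x - 2 * ℓ) ^ 2
      = (x - 2 * k) * ∏ ℓ ∈ Finset.Icc 1 k, ((x - 2 * ℓ + 2) * (x - 2 * ℓ)) := by
  induction k with
  | zero => simp
  | succ k ih =>
    rw [Finset.prod_Icc_succ_top (by omega), Finset.prod_Icc_succ_top (by omega)]
    push_cast
    push_cast at ih
    linear_combination (x - 2 * k - 2) ^ 2 * ih

theorem Pk_eval_upper (n k : ℕ) (hk : 0 < k) (hn : 2 * k < n) :
    (∏ ℓ ∈ Finset.Icc 1 k, (((n : ℝ) + 2 * k - 4) + ((n : ℝ) / 2 + k - 2 * ℓ) ^ 2)) ≥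
      (((n : ℝ) + 2 * k) / ((n : ℝ) - 2 * k)) *
        ∏ ℓ ∈ Finset.Icc 1 k, ((0 : ℝ) + ((n : ℝ) / 2 + k - 2 * ℓ) ^ 2) := by
  set x : ℝ := (n : ℝ) / 2 + k with hxdef
  have hnk : (2 * k : ℝ) < n := by exact_mod_cast hn
  have hpos : (0 : ℝ) < x - 2 * k := by simp only [hxdef]; linarith
  have hkey := tele_aux x k
  have hratio : ((n : ℝ) + 2 * k) / ((n : ℝ) - 2 * k) = x / (x - 2 * k) := by
    rw [hxdef]
    rw [div_eq_div_iff (by linarith) (by linarith)]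
    ring
  have hrhs : (((n : ℝ) + 2 * k) / ((n : ℝ) - 2 * k)) *
        ∏ ℓ ∈ Finset.Icc 1 k, ((0 : ℝ) + ((n : ℝ) / 2 + k - 2 * ℓ) ^ 2)
      = ∏ ℓ ∈ Finset.Icc 1 k, ((x - 2 * ℓ + 2) * (x - 2 * ℓ)) := by
    have : ∏ ℓ ∈ Finset.Icc 1 k, ((0 : ℝ) + ((n : ℝ) / 2 + k - 2 * ℓ) ^ 2)
        = ∏ ℓ ∈ Finset.Icc 1 k, (x - 2 * ℓ) ^ 2 := by
      apply Finset.prod_congr rfl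
      intro ℓ _
      rw [hxdef]; ring
    rw [this, hratio, div_mul_eq_mul_div, hkey, mul_comm,
      mul_div_assoc, div_self (ne_of_gt hpos), mul_one]
  rw [ge_iff_le, hrhs]
  apply Finset.prod_le_prod
  · intro ℓ hℓ
    simp only [Finset.mem_Icc] at hℓ
    have h1 : (ℓ : ℝ) ≤ k := by exact_mod_cast hℓ.2
    have h2 : (0 : ℝ) < x - 2 * ℓ := by linarith
    nlinarith
  · intro ℓ hℓ
    simp only [Finset.mem_Icc] at hℓ
    have h1 : (1 : ℝ) ≤ ℓ := by exact_mod_cast hℓ.1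
    have : ((n : ℝ) + 2 * k - 4) + (x - 2 * ℓ) ^ 2
        - (x - 2 * ℓ + 2) * (x - 2 * ℓ) = 4 * ℓ - 4 := by
      rw [hxdef]; ring
    linarith
end
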